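/- Let G = (Q, δ, π̃) be a strongly connected PFSA over Σ with distinguishable states and stationary distribution ℘_λ. Then there exists a constant C > 0 (depending only on G) such that for every ε ∈ (0,1) there is an ε-synchronizing word x ∈ Σ* of length |x| ≤ C·(1 + log(1/ε)); equivalently, at most O(1/ε) words from the lexicographically ordered set of all words over Σ need to be examined to find an ε-synchronizing word. -/

import Mathlib

open MeasureTheory Filter

/-- Cylinder set `xΣ^ω` of a finite word `x`: infinite sequences beginning with `x`. -/
def Cylinder {A : Type*} (x : List A) : Set (ℕ → A) :=
  {ω | ∀ i : Fin x.length, ω i = x.get i}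

/-- The σ-algebra `B` on `Σ^ω` generated by the cylinder sets. -/
def CylSigma (A : Type*) : MeasurableSpace (ℕ → A) :=
  MeasurableSpace.generateFrom (Set.range (Cylinder (A := A)))

/-- A probabilistic finite-state automaton over a finite alphabet `S`. -/
structure PFSA (Q S : Type*) [Fintype S] where
  δ : Q → S → Q
  π : Q → S → ℝ
  π_nonneg : ∀ q σ, 0 ≤ π q σ
  π_sum : ∀ q, ∑ σ, π q σ = 1

namespace PFSA

variable {Q S : Type*} [Fintype S]

/-- Extension of the transition map to finite words. -/
def δs (G : PFSA Q S) : Q → List S → Q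
  | q, [] => q
  | q, σ :: x => G.δs (G.δ q σ) x

/-- Extension of the symbol-generation probabilities to finite words. -/
def πs (G : PFSA Q S) : Q → List S → ℝ
  | _, [] => 1
  | q, σ :: x => G.π q σ * G.πs (G.δ q σ) x

/-- `G` is strongly connected. -/
def StronglyConnected (G : PFSA Q S) : Prop :=
  ∀ q q' : Q, ∃ x : List S, G.δs q x = q' ∧ 0 < G.πs q x

/-- `G` has distinguishable states. -/
def Distinguishable (G : PFSA Q S) : Prop :=
  ∀ q q' : Q, q ≠ q' → ∃ x : List S, G.πs q x ≠ G.πs q' x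

variable [Fintype Q] [DecidableEq Q]

/-- The transition matrix `M` of the Markov chain induced by `G`. -/
def M (G : PFSA Q S) : Matrix Q Q ℝ :=
  fun q q' => ∑ σ, if G.δ q σ = q' then G.π q σ else 0

/-- `p` is a stationary distribution of `G`: a probability vector with `p M = p`. -/
def IsStationary (G : PFSA Q S) (p : Q → ℝ) : Prop :=
  (∀ q, 0 ≤ p q) ∧ (∑ q, p q = 1) ∧ ∀ q', ∑ q, p q * G.M q q' = p q'

/-- Symbol-specific transformation matrix `Γ_σ`. -/
def Γ (G : PFSA Q S) (σ : S) : Matrix Q Q ℝ :=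
  fun q q' => if G.δ q σ = q' then G.π q σ else 0

/-- Product of transformation matrices along a word: `Γ_{σ₁}⋯Γ_{σ_m}`. -/
def Γs (G : PFSA Q S) (x : List S) : Matrix Q Q ℝ := (x.map G.Γ).prod

/-- The (unnormalized) row vector `p Γ_{σ₁}⋯Γ_{σ_m}`. -/
def wvec (G : PFSA Q S) (p : Q → ℝ) (x : List S) : Q → ℝ :=
  Matrix.vecMul p (G.Γs x)

/-- `Pr(x) = ‖p Γ_{σ₁}⋯Γ_{σ_m}‖₁` (for a nonnegative vector `p`). -/
def PrW (G : PFSA Q S) (p : Q → ℝ) (x : List S) : ℝ :=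
  ∑ q, G.wvec p x q

/-- `℘_x`: the ℓ1-normalization of `p Γ_{σ₁}⋯Γ_{σ_m}`. -/
noncomputable def wdist (G : PFSA Q S) (p : Q → ℝ) (x : List S) : Q → ℝ :=
  fun q => G.wvec p x q / G.PrW p x

end PFSA

/-- The point-mass probability vector `e_q` at `q`. -/
def eVec {Q : Type*} [DecidableEq Q] (q : Q) : Q → ℝ := fun q' => if q' = q then 1 else 0

/-- The ℓ∞ norm of a finitely indexed vector. -/
noncomputable def linf {ι : Type*} [Fintype ι] (v : ι → ℝ) : ℝ := ⨆ i, |v i|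

/-- `x` is an `ε`-synchronizing word for `G` with stationary distribution `p`. -/
noncomputable def EpsSync {Q S : Type*} [Fintype S] [Fintype Q] [DecidableEq Q]
    (G : PFSA Q S) (p : Q → ℝ) (ε : ℝ) (x : List S) : Prop :=
  0 < G.PrW p x ∧ ∃ q : Q, linf (fun q' => G.wdist p x q' - eVec q q') ≤ ε

/-- `p` is a probability vector. -/
def IsProbVec {ι : Type*} [Fintype ι] (p : ι → ℝ) : Prop :=
  (∀ i, 0 ≤ p i) ∧ ∑ i, p i = 1

/-- Entropy (base 2) of a finitely supported vector (`0 log 0 = 0`). -/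
noncomputable def entropy2 {ι : Type*} [Fintype ι] (p : ι → ℝ) : ℝ :=
  -∑ i, p i * Real.logb 2 (p i)

/-- The generalized binary entropy function `B(ε,k)` (for `ε ∈ (0,1/2]`). -/
noncomputable def Bdev (ε : ℝ) (k : ℕ) : ℝ :=
  ε * Real.logb 2 (((k : ℝ) - 1) / ε) + (1 - ε) * Real.logb 2 (1 / (1 - ε))

/-- Number of (possibly overlapping) occurrences of `x` as a contiguous substring of `s`. -/
def countOcc {A : Type*} [DecidableEq A] (s x : List A) : ℕ :=
  ((List.range s.length).filter fun i => decide ((s.drop i).take x.length = x)).length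

/-- Total count `∑_{σ∈Σ} #^s(xσ)`. -/
def totCount {A : Type*} [Fintype A] [DecidableEq A] (s x : List A) : ℕ :=
  ∑ σ : A, countOcc s (x ++ [σ])

/-- The empirical symbolic derivative `φ^s(x)`. -/
noncomputable def phi {A : Type*} [Fintype A] [DecidableEq A] (s x : List A) : A → ℝ :=
  fun σ => (countOcc s (x ++ [σ]) : ℝ) / (totCount s x : ℝ)

/-- The length-`n` prefix `ω↾n` of an infinite sequence `ω`. -/
def pre {A : Type*} (ω : ℕ → A) (n : ℕ) : List A := (List.range n).map ω

/-!
The runs of `G` started in two states `a ≠ b` are compared through their *affinity*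
`affinity n a b = ∑ √(π̃(a,w) π̃(b,w))`, summed over the words `w` of length `n` after which the
runs have not merged. Since `∑_σ √(π̃(a,σ) π̃(b,σ)) ≤ 1`, with equality only if
`π̃(a,·) = π̃(b,·)`, the affinity is at most `1` and non-increasing in `n`, and it stays `1` for all
`n` only if `a` and `b` generate the same word probabilities. So distinguishability gives a horizon
`n₀` and some `κ < 1` with `affinity n₀ ≤ κ` on all pairs. A first-letter recursion then yields
`affinity (k n₀) ≤ κᵏ`.

For a word `w`, let `t` maximise `℘(q) π̃(q,w)`. The mass of `℘_λ Γ_w` outside the state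
`δ(t,w)` is at most `∑_{a,b} √(π̃(a,w) π̃(b,w))` over non-merged pairs, so averaged over all
words of length `k n₀` (which carry total probability one) it is at most `|Q|² κᵏ` times
`Pr(w)`. Some word therefore does at least as well as the average, and it is
`|Q|² κᵏ`-synchronizing; taking `k ≈ log(|Q|²/ε) / log(1/κ)` gives the logarithmic length.
-/

open Filter Topology

lemma Fintype.sum_pi_fin_succ {S M : Type*} [Fintype S] [AddCommMonoid M] {n : ℕ}
    (f : (Fin (n + 1) → S) → M) :
    ∑ w, f w = ∑ σ, ∑ v : Fin n → S, f (Fin.cons σ v) := by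
  rw [← Fintype.sum_prod_type']
  exact (Fintype.sum_equiv (Fin.consEquiv fun _ => S) _ _ fun p => rfl).symm

lemma nonempty_of_sum_eq_one {ι : Type*} [Fintype ι] {p : ι → ℝ} (h : ∑ i, p i = 1) :
    Nonempty ι :=
  Finset.univ_nonempty_iff.1 (Finset.nonempty_of_sum_ne_zero (h ▸ one_ne_zero))

lemma exists_pos_and_le_mul_of_sum_le {ι : Type*} [Fintype ι] {f g : ι → ℝ} {c : ℝ}
    (hf : ∀ i, 0 ≤ f i) (hg : ∀ i, 0 ≤ g i) (hpos : 0 < ∑ i, f i)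
    (h : ∑ i, g i ≤ c * ∑ i, f i) : ∃ i, 0 < f i ∧ g i ≤ c * f i := by
  by_contra! hlt
  obtain ⟨i, -, hi⟩ := Finset.exists_lt_of_sum_lt (f := fun _ => (0 : ℝ)) (by simpa using hpos)
  have : c * ∑ i, f i < ∑ i, g i := by
    rw [Finset.mul_sum]
    refine Finset.sum_lt_sum (fun j _ => ?_) ⟨i, Finset.mem_univ i, hlt i hi⟩
    rcases (hf j).eq_or_lt with hj | hj
    · simp [← hj, hg j]
    · exact (hlt j hj).le
  linarith

lemma exists_mul_pow_le_of_lt_one {B κ : ℝ} (hB : 1 ≤ B) (hκ0 : 0 < κ) (hκ1 : κ < 1) :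
    ∃ c > (0 : ℝ), ∀ ε : ℝ, 0 < ε → ε < 1 →
      ∃ k : ℕ, B * κ ^ k ≤ ε ∧ (k : ℝ) ≤ c * (1 + Real.log (1 / ε)) := by
  set L := -Real.log κ
  have hL : 0 < L := neg_pos.2 (Real.log_neg hκ0 hκ1)
  have hA : 0 ≤ Real.log B := Real.log_nonneg hB
  refine ⟨(Real.log B + L + 1) / L, by positivity, fun ε hε hε1 => ?_⟩
  have hy : 0 < Real.log (1 / ε) := Real.log_pos (by rw [one_div]; exact one_lt_inv₀ hε |>.2 hε1)
  set k := ⌈(Real.log B + Real.log (1 / ε)) / L⌉₊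
  refine ⟨k, ?_, ?_⟩
  · have hk : Real.log B + Real.log (1 / ε) ≤ k * L := (div_le_iff₀ hL).1 (Nat.le_ceil _)
    rw [← Real.log_le_log_iff (by positivity) hε, Real.log_mul (by positivity) (by positivity),
      Real.log_pow]
    rw [one_div, Real.log_inv] at hk
    linarith
  · have hk : (k : ℝ) < (Real.log B + Real.log (1 / ε)) / L + 1 :=
      Nat.ceil_lt_add_one (by positivity)
    rw [div_add_one hL.ne', lt_div_iff₀ hL] at hk
    rw [div_mul_eq_mul_div, le_div_iff₀ hL]
    nlinarith

section Bhattacharyya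

variable {ι : Type*} [Fintype ι] {x y : ι → ℝ}

lemma sum_sq_sqrt_sub_sqrt (hx : ∀ i, 0 ≤ x i) (hy : ∀ i, 0 ≤ y i)
    (hx1 : ∑ i, x i = 1) (hy1 : ∑ i, y i = 1) :
    ∑ i, (√(x i) - √(y i)) ^ 2 = 2 * (1 - ∑ i, √(x i * y i)) := by
  have h : ∀ i, (√(x i) - √(y i)) ^ 2 = x i + y i - 2 * √(x i * y i) := fun i => by
    rw [sub_sq, Real.sq_sqrt (hx i), Real.sq_sqrt (hy i), Real.sqrt_mul (hx i)]
    ring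
  simp only [h, Finset.sum_sub_distrib, Finset.sum_add_distrib, ← Finset.mul_sum, hx1, hy1]
  ring

lemma sum_sqrt_mul_le_one (hx : ∀ i, 0 ≤ x i) (hy : ∀ i, 0 ≤ y i)
    (hx1 : ∑ i, x i = 1) (hy1 : ∑ i, y i = 1) : ∑ i, √(x i * y i) ≤ 1 := by
  have := sum_sq_sqrt_sub_sqrt hx hy hx1 hy1
  have : 0 ≤ ∑ i, (√(x i) - √(y i)) ^ 2 := Finset.sum_nonneg fun i _ => sq_nonneg _
  linarith

lemma eq_of_sum_sqrt_mul_eq_one (hx : ∀ i, 0 ≤ x i) (hy : ∀ i, 0 ≤ y i)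
    (hx1 : ∑ i, x i = 1) (hy1 : ∑ i, y i = 1) (h : ∑ i, √(x i * y i) = 1) : x = y := by
  have hsq := sum_sq_sqrt_sub_sqrt hx hy hx1 hy1
  rw [h, sub_self, mul_zero, Finset.sum_eq_zero_iff_of_nonneg fun i _ => sq_nonneg _] at hsq
  funext i
  have : √(x i) = √(y i) := sub_eq_zero.1 (pow_eq_zero_iff two_ne_zero |>.1 (hsq i (by simp)))
  rwa [Real.sqrt_inj (hx i) (hy i)] at this

end Bhattacharyya

lemma mul_le_sqrt_mul_of_mul_le {p p' u v : ℝ} (hp0 : 0 ≤ p) (hp1 : p ≤ 1) (hp'1 : p' ≤ 1)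
    (hu : 0 ≤ u) (hv : 0 ≤ v) (h : p * u ≤ p' * v) : p * u ≤ √(v * u) := by
  rw [Real.le_sqrt (by positivity) (by positivity)]
  have hpu : 0 ≤ p * u := mul_nonneg hp0 hu
  nlinarith [mul_le_mul_of_nonneg_left h hpu, mul_le_mul_of_nonneg_right hp'1 hv,
    mul_le_mul_of_nonneg_right hp1 (mul_nonneg hu hv)]

lemma linf_sub_eVec_le {ι : Type*} [Fintype ι] [DecidableEq ι] {v : ι → ℝ} (hv : ∀ i, 0 ≤ v i)
    (hv1 : ∑ i, v i = 1) {ε : ℝ} (hε : 0 ≤ ε) {t : ι} (ht : 1 - ε ≤ v t) :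
    linf (fun i => v i - eVec t i) ≤ ε := by
  refine Real.iSup_le (fun i => ?_) hε
  by_cases hi : i = t
  · subst hi
    have : v i ≤ 1 := hv1 ▸ Finset.single_le_sum (fun j _ => hv j) (Finset.mem_univ i)
    simp only [eVec, if_true, abs_le]
    constructor <;> linarith
  · have : v i + v t ≤ 1 := by
      rw [← hv1, ← Finset.sum_pair hi]
      exact Finset.sum_le_sum_of_subset_of_nonneg (Finset.subset_univ _) fun j _ _ => hv j
    simp only [eVec, if_neg hi, sub_zero, abs_le]
    constructor <;> linarith [hv i]

namespace PFSA

variable {Q S : Type*} [Fintype S] (G : PFSA Q S)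

lemma πs_nonneg (q : Q) (x : List S) : 0 ≤ G.πs q x := by
  induction x generalizing q with
  | nil => exact zero_le_one
  | cons σ x ih => exact mul_nonneg (G.π_nonneg q σ) (ih _)

lemma sum_πs_ofFn (n : ℕ) (q : Q) : ∑ w : Fin n → S, G.πs q (List.ofFn w) = 1 := by
  induction n generalizing q with
  | zero => simp [πs]
  | succ n ih =>
    simp only [Fintype.sum_pi_fin_succ, List.ofFn_cons, πs, ← Finset.mul_sum, ih, mul_one,
      G.π_sum]

lemma sum_sqrt_π_mul_π_le_one (a b : Q) : ∑ σ, √(G.π a σ * G.π b σ) ≤ 1 :=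
  sum_sqrt_mul_le_one (G.π_nonneg a) (G.π_nonneg b) (G.π_sum a) (G.π_sum b)

section Affinity

variable [DecidableEq Q]

noncomputable def affinity : ℕ → Q → Q → ℝ
  | 0, a, b => if a = b then 0 else 1
  | n + 1, a, b => ∑ σ, √(G.π a σ * G.π b σ) * affinity n (G.δ a σ) (G.δ b σ)

lemma affinity_succ (n : ℕ) (a b : Q) :
    G.affinity (n + 1) a b = ∑ σ, √(G.π a σ * G.π b σ) * G.affinity n (G.δ a σ) (G.δ b σ) :=
  rfl

lemma affinity_self (n : ℕ) (a : Q) : G.affinity n a a = 0 := by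
  induction n generalizing a with
  | zero => simp [affinity]
  | succ n ih => simp [affinity_succ, ih]

lemma affinity_le_one (n : ℕ) (a b : Q) : G.affinity n a b ≤ 1 := by
  induction n generalizing a b with
  | zero => rw [affinity]; split_ifs <;> norm_num
  | succ n ih =>
    calc G.affinity (n + 1) a b ≤ ∑ σ, √(G.π a σ * G.π b σ) * 1 :=
          Finset.sum_le_sum fun σ _ => mul_le_mul_of_nonneg_left (ih _ _) (Real.sqrt_nonneg _)
      _ ≤ 1 := by simpa using G.sum_sqrt_π_mul_π_le_one a b

lemma affinity_succ_le (n : ℕ) (a b : Q) : G.affinity (n + 1) a b ≤ G.affinity n a b := by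
  induction n generalizing a b with
  | zero =>
    by_cases h : a = b
    · simp [h, affinity_self]
    · simpa [affinity, h] using G.affinity_le_one 1 a b
  | succ n ih =>
    exact Finset.sum_le_sum fun σ _ => mul_le_mul_of_nonneg_left (ih _ _) (Real.sqrt_nonneg _)

lemma affinity_antitone (a b : Q) : Antitone fun n => G.affinity n a b :=
  antitone_nat_of_succ_le fun n => G.affinity_succ_le n a b

lemma affinity_succ_eq_one {n : ℕ} {a b : Q} (h : G.affinity (n + 1) a b = 1) :
    G.π a = G.π b ∧ ∀ σ, 0 < G.π a σ → G.affinity n (G.δ a σ) (G.δ b σ) = 1 := by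
  set w := fun σ => √(G.π a σ * G.π b σ)
  have hdefect : ∀ σ, 0 ≤ w σ * (1 - G.affinity n (G.δ a σ) (G.δ b σ)) := fun σ =>
    mul_nonneg (Real.sqrt_nonneg _) (sub_nonneg.2 (G.affinity_le_one _ _ _))
  have hsum : ∑ σ, w σ * (1 - G.affinity n (G.δ a σ) (G.δ b σ)) = ∑ σ, w σ - 1 := by
    simp only [mul_sub, mul_one, Finset.sum_sub_distrib, w, ← affinity_succ, h]
  have hw1 : ∑ σ, w σ ≤ 1 := G.sum_sqrt_π_mul_π_le_one a b
  have hzero : ∑ σ, w σ * (1 - G.affinity n (G.δ a σ) (G.δ b σ)) = 0 :=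
    le_antisymm (by linarith) (Finset.sum_nonneg fun σ _ => hdefect σ)
  have hπ : G.π a = G.π b :=
    eq_of_sum_sqrt_mul_eq_one (G.π_nonneg a) (G.π_nonneg b) (G.π_sum a) (G.π_sum b)
      (by linarith)
  refine ⟨hπ, fun σ hσ => ?_⟩
  have hwσ : 0 < w σ := Real.sqrt_pos.2 (by rw [← congrFun hπ σ]; positivity)
  have := (Finset.sum_eq_zero_iff_of_nonneg fun σ _ => hdefect σ).1 hzero σ (Finset.mem_univ σ)
  rcases mul_eq_zero.1 this with h0 | h1
  · exact absurd h0 hwσ.ne'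
  · linarith

lemma πs_eq_of_affinity_eq_one (x : List S) {a b : Q} (h : ∀ n, G.affinity n a b = 1) :
    G.πs a x = G.πs b x := by
  induction x generalizing a b with
  | nil => rfl
  | cons σ x ih =>
    obtain ⟨hπ, -⟩ := G.affinity_succ_eq_one (h 1)
    rcases (G.π_nonneg a σ).eq_or_lt with hσ | hσ
    · simp [πs, ← hσ, ← congrFun hπ σ]
    · have hnext n := (G.affinity_succ_eq_one (h (n + 1))).2 σ hσ
      simp only [πs, hπ, ih hnext]

lemma exists_affinity_lt_one (hDist : G.Distinguishable) (a b : Q) :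
    ∃ n, G.affinity n a b < 1 := by
  by_contra! h
  by_cases hab : a = b
  · subst hab; linarith [h 0, G.affinity_self 0 a]
  · obtain ⟨x, hx⟩ := hDist a b hab
    exact hx (G.πs_eq_of_affinity_eq_one x fun n => le_antisymm (G.affinity_le_one n a b) (h n))

lemma exists_affinity_le_of_lt_one [Finite Q] (hDist : G.Distinguishable) :
    ∃ n₀ : ℕ, 0 < n₀ ∧ ∃ κ : ℝ, 0 < κ ∧ κ < 1 ∧ ∀ a b, G.affinity n₀ a b ≤ κ := by
  have hn : ∀ᶠ n in atTop, ∀ a b, G.affinity n a b < 1 := by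
    refine eventually_all.2 fun a => eventually_all.2 fun b => ?_
    obtain ⟨n, hn⟩ := G.exists_affinity_lt_one hDist a b
    exact eventually_atTop.2 ⟨n, fun m hm => (G.affinity_antitone a b hm).trans_lt hn⟩
  obtain ⟨n₀, hn₀, hlt⟩ := ((eventually_gt_atTop 0).and hn).exists
  have hκ : ∀ᶠ κ in 𝓝[<] (1 : ℝ), κ ∈ Set.Ioo 0 1 ∧ ∀ a b, G.affinity n₀ a b ≤ κ := by
    refine Eventually.and (Ioo_mem_nhdsLT zero_lt_one)
      (eventually_all.2 fun a => eventually_all.2 fun b => ?_)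
    exact ((lt_mem_nhds (hlt a b)).filter_mono nhdsWithin_le_nhds).mono fun _ => le_of_lt
  obtain ⟨κ, ⟨hκ0, hκ1⟩, hκ⟩ := hκ.exists
  exact ⟨n₀, hn₀, κ, hκ0, hκ1, hκ⟩

lemma affinity_add_le {n₀ : ℕ} {κ : ℝ} (hκ : ∀ a b, G.affinity n₀ a b ≤ κ)
    (m : ℕ) (a b : Q) : G.affinity (m + n₀) a b ≤ κ * G.affinity m a b := by
  induction m generalizing a b with
  | zero =>
    by_cases hab : a = b
    · simp [hab, affinity_self]
    · simpa [affinity, hab] using hκ a b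
  | succ m ih =>
    rw [Nat.add_right_comm, affinity_succ, affinity_succ, Finset.mul_sum]
    refine Finset.sum_le_sum fun σ _ => ?_
    rw [mul_left_comm]
    exact mul_le_mul_of_nonneg_left (ih _ _) (Real.sqrt_nonneg _)

lemma affinity_mul_le_pow {n₀ : ℕ} {κ : ℝ} (hκ0 : 0 ≤ κ) (hκ : ∀ a b, G.affinity n₀ a b ≤ κ)
    (k : ℕ) (a b : Q) : G.affinity (k * n₀) a b ≤ κ ^ k := by
  induction k generalizing a b with
  | zero => simpa using G.affinity_le_one 0 a b
  | succ k ih =>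
    calc G.affinity ((k + 1) * n₀) a b ≤ κ * G.affinity (k * n₀) a b := by
          rw [Nat.succ_mul]; exact G.affinity_add_le hκ _ a b
      _ ≤ κ * κ ^ k := mul_le_mul_of_nonneg_left (ih a b) hκ0
      _ = κ ^ (k + 1) := (pow_succ' κ k).symm

lemma sum_affinity_mul_le [Fintype Q] {n₀ : ℕ} {κ : ℝ} (hκ0 : 0 ≤ κ)
    (hκ : ∀ a b, G.affinity n₀ a b ≤ κ) (k : ℕ) :
    ∑ a, ∑ b, G.affinity (k * n₀) a b ≤ Fintype.card Q ^ 2 * κ ^ k :=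
  calc ∑ a, ∑ b, G.affinity (k * n₀) a b ≤ ∑ _a : Q, ∑ _b : Q, κ ^ k :=
        Finset.sum_le_sum fun a _ => Finset.sum_le_sum fun b _ =>
          G.affinity_mul_le_pow hκ0 hκ k a b
    _ = Fintype.card Q ^ 2 * κ ^ k := by simp [sq, mul_assoc]

lemma affinity_eq_sum (n : ℕ) (a b : Q) :
    G.affinity n a b = ∑ w : Fin n → S,
      if G.δs a (List.ofFn w) = G.δs b (List.ofFn w) then 0
      else √(G.πs a (List.ofFn w) * G.πs b (List.ofFn w)) := by
  induction n generalizing a b with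
  | zero => simp [affinity, δs, πs]
  | succ n ih =>
    rw [affinity_succ, Fintype.sum_pi_fin_succ]
    refine Finset.sum_congr rfl fun σ _ => ?_
    rw [ih, Finset.mul_sum]
    refine Finset.sum_congr rfl fun v _ => ?_
    simp only [List.ofFn_cons, δs, πs]
    split_ifs
    · rw [mul_zero]
    · rw [mul_mul_mul_comm, Real.sqrt_mul (mul_nonneg (G.π_nonneg a σ) (G.π_nonneg b σ))]

end Affinity

section Synchronization

variable [Fintype Q] [DecidableEq Q] {p : Q → ℝ}

lemma Γs_apply (x : List S) (q q' : Q) :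
    G.Γs x q q' = if G.δs q x = q' then G.πs q x else 0 := by
  -- the closing `rfl`s are needed because `simp` does not rewrite the unreduced `δs` inside the
  -- `Decidable` instances of the `if`s
  induction x generalizing q with
  | nil => simp only [Γs, List.map_nil, List.prod_nil, Matrix.one_apply, δs, πs]; rfl
  | cons σ x ih =>
    simp only [Γs, List.map_cons, List.prod_cons] at ih ⊢
    simp only [Matrix.mul_apply, Γ, ite_mul, zero_mul, Finset.sum_ite_eq, Finset.mem_univ,
      if_true]
    simp only [ih, δs, πs, mul_ite, mul_zero]; rfl

lemma wvec_apply (x : List S) (q' : Q) :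
    G.wvec p x q' = ∑ q, if G.δs q x = q' then p q * G.πs q x else 0 := by
  simp [wvec, Matrix.vecMul, dotProduct, Γs_apply, mul_ite]

lemma wvec_nonneg (hp : ∀ q, 0 ≤ p q) (x : List S) (q' : Q) : 0 ≤ G.wvec p x q' := by
  rw [wvec_apply]
  exact Finset.sum_nonneg fun q _ => by
    split_ifs
    exacts [mul_nonneg (hp q) (G.πs_nonneg q x), le_rfl]

lemma PrW_eq_sum (x : List S) : G.PrW p x = ∑ q, p q * G.πs q x := by
  rw [PrW, Finset.sum_congr rfl fun q' _ => G.wvec_apply x q', Finset.sum_comm]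
  simp

lemma PrW_sub_wvec (x : List S) (q' : Q) :
    G.PrW p x - G.wvec p x q' = ∑ q, if G.δs q x = q' then 0 else p q * G.πs q x := by
  rw [PrW_eq_sum, wvec_apply, ← Finset.sum_sub_distrib]
  exact Finset.sum_congr rfl fun q _ => by split_ifs <;> ring

lemma sum_PrW_ofFn (hp : ∑ q, p q = 1) (n : ℕ) :
    ∑ w : Fin n → S, G.PrW p (List.ofFn w) = 1 := by
  simp only [PrW_eq_sum]
  rw [Finset.sum_comm]
  simp [← Finset.mul_sum, sum_πs_ofFn, hp]

lemma PrW_nonneg (hp : ∀ q, 0 ≤ p q) (x : List S) : 0 ≤ G.PrW p x := by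
  rw [PrW_eq_sum]
  exact Finset.sum_nonneg fun q _ => mul_nonneg (hp q) (G.πs_nonneg q x)

lemma PrW_sub_wvec_nonneg (hp : ∀ q, 0 ≤ p q) (x : List S) (t : Q) :
    0 ≤ G.PrW p x - G.wvec p x t := by
  rw [PrW_sub_wvec]
  exact Finset.sum_nonneg fun q _ => by
    split_ifs
    exacts [le_rfl, mul_nonneg (hp q) (G.πs_nonneg q x)]

-- `t` carries the largest share of `Pr(x)`, so `p b π̃(b,x) ≤ √(π̃(t,x) π̃(b,x))` for every `b`.
lemma PrW_sub_wvec_le_sum_sqrt (hp0 : ∀ q, 0 ≤ p q) (hp1 : ∑ q, p q = 1) {x : List S} {t : Q}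
    (ht : ∀ q, p q * G.πs q x ≤ p t * G.πs t x) :
    G.PrW p x - G.wvec p x (G.δs t x) ≤
      ∑ a, ∑ b, if G.δs a x = G.δs b x then 0 else √(G.πs a x * G.πs b x) := by
  have hp_le : ∀ q, p q ≤ 1 := fun q =>
    hp1 ▸ Finset.single_le_sum (fun i _ => hp0 i) (Finset.mem_univ q)
  have hterm : ∀ a, 0 ≤ ∑ b, if G.δs a x = G.δs b x then 0 else √(G.πs a x * G.πs b x) :=
    fun a => Finset.sum_nonneg fun b _ => by split_ifs <;> positivity
  rw [PrW_sub_wvec]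
  refine le_trans (Finset.sum_le_sum fun b _ => ?_)
    (Finset.single_le_sum (fun a _ => hterm a) (Finset.mem_univ t))
  by_cases hb : G.δs b x = G.δs t x
  · simp [hb]
  · rw [if_neg hb, if_neg (Ne.symm hb)]
    exact mul_le_sqrt_mul_of_mul_le (hp0 b) (hp_le b) (hp_le t) (G.πs_nonneg b x)
      (G.πs_nonneg t x) (ht b)

lemma exists_word_PrW_sub_wvec_le (hp0 : ∀ q, 0 ≤ p q) (hp1 : ∑ q, p q = 1) (n : ℕ) :
    ∃ x : List S, ∃ t : Q, x.length = n ∧ 0 < G.PrW p x ∧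
      G.PrW p x - G.wvec p x t ≤ (∑ a, ∑ b, G.affinity n a b) * G.PrW p x := by
  have := nonempty_of_sum_eq_one hp1
  choose t ht using fun w : Fin n → S => Finite.exists_max fun q => p q * G.πs q (List.ofFn w)
  have hsum : ∑ w, (G.PrW p (List.ofFn w) - G.wvec p (List.ofFn w) (G.δs (t w) (List.ofFn w)))
      ≤ (∑ a, ∑ b, G.affinity n a b) * ∑ w : Fin n → S, G.PrW p (List.ofFn w) := by
    rw [G.sum_PrW_ofFn hp1, mul_one]
    simp only [affinity_eq_sum]
    refine (Finset.sum_le_sum fun w _ => G.PrW_sub_wvec_le_sum_sqrt hp0 hp1 (ht w)).trans_eq ?_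
    rw [Finset.sum_comm]
    exact Finset.sum_congr rfl fun a _ => Finset.sum_comm
  obtain ⟨w, hw, hle⟩ := exists_pos_and_le_mul_of_sum_le (fun w => G.PrW_nonneg hp0 _)
    (fun w => G.PrW_sub_wvec_nonneg hp0 _ _) (by rw [G.sum_PrW_ofFn hp1]; exact one_pos) hsum
  exact ⟨List.ofFn w, _, List.length_ofFn, hw, hle⟩

lemma epsSync_of_PrW_sub_wvec_le (hp : ∀ q, 0 ≤ p q) {ε : ℝ} (hε : 0 ≤ ε) {x : List S} {t : Q}
    (hPr : 0 < G.PrW p x) (h : G.PrW p x - G.wvec p x t ≤ ε * G.PrW p x) :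
    EpsSync G p ε x := by
  refine ⟨hPr, t, linf_sub_eVec_le (fun q => div_nonneg (G.wvec_nonneg hp x q) hPr.le) ?_ hε ?_⟩
  · rw [← Finset.sum_div]
    exact div_self hPr.ne'
  · rw [le_div_iff₀ hPr]
    linarith

end Synchronization

end PFSA

theorem stmt_6_general {Q S : Type*} [Fintype S] [Fintype Q] [DecidableEq Q]
    (G : PFSA Q S) (hDist : G.Distinguishable)
    (℘ : Q → ℝ) (h℘ : G.IsStationary ℘) :
    ∃ C > (0 : ℝ), ∀ ε : ℝ, 0 < ε → ε < 1 →
      ∃ x : List S, (x.length : ℝ) ≤ C * (1 + Real.log (1 / ε)) ∧ EpsSync G ℘ ε x := by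
  obtain ⟨h℘0, h℘1, -⟩ := h℘
  have := nonempty_of_sum_eq_one h℘1
  obtain ⟨n₀, hn₀, κ, hκ0, hκ1, hκ⟩ := G.exists_affinity_le_of_lt_one hDist
  have hcard : (1 : ℝ) ≤ Fintype.card Q ^ 2 := one_le_pow₀ (Nat.one_le_cast.2 Fintype.card_pos)
  obtain ⟨c, hc, hk⟩ := exists_mul_pow_le_of_lt_one hcard hκ0 hκ1
  refine ⟨n₀ * c, by positivity, fun ε hε hε1 => ?_⟩
  obtain ⟨k, hkε, hklog⟩ := hk ε hε hε1
  obtain ⟨x, t, hlen, hPr, hx⟩ := G.exists_word_PrW_sub_wvec_le h℘0 h℘1 (k * n₀)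
  have hsum : ∑ a, ∑ b, G.affinity (k * n₀) a b ≤ ε := (G.sum_affinity_mul_le hκ0.le hκ k).trans hkε
  refine ⟨x, ?_, G.epsSync_of_PrW_sub_wvec_le h℘0 hε.le hPr
    (hx.trans (mul_le_mul_of_nonneg_right hsum hPr.le))⟩
  rw [hlen, Nat.cast_mul, mul_comm, mul_assoc]
  exact mul_le_mul_of_nonneg_left hklog (Nat.cast_nonneg n₀)

/-- an ε-synchronizing word of length `O(log(1/ε))` always exists
(equivalently, at most `O(1/ε)` lexicographically ordered words need be examined). -/
theorem stmt_6 {Q S : Type*} [Fintype S] [Fintype Q] [DecidableEq Q]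
    (hS : 2 ≤ Fintype.card S) (G : PFSA Q S)
    (hSC : G.StronglyConnected) (hDist : G.Distinguishable)
    (℘ : Q → ℝ) (h℘ : G.IsStationary ℘) :
    ∃ C > (0 : ℝ), ∀ ε : ℝ, 0 < ε → ε < 1 →
      ∃ x : List S, (x.length : ℝ) ≤ C * (1 + Real.log (1 / ε)) ∧ EpsSync G ℘ ε x :=
  stmt_6_general G hDist ℘ h℘
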